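/- Let X be a quandle and Y a hierarchical quandle over X, and let K be a commutative ring. Let V_n be the free K-module on tuples ((y1,...,yn),(x1,...,xn)) ∈ Y^n × X^n. Define λ_{n,i} on basis elements by sending ((y1,...,yn),(x1,...,xn)) to ((y1 *_{x1}^{xi} yi, ..., y_{i-1} *_{x_{i-1}}^{xi} yi, y_{i+1}, ..., yn),(x1*xi, ..., x_{i-1}*xi, x_{i+1}, ..., xn)), and l_n = Σ_{i=1}^n (-1)^{i+1} λ_{n,i}. Then l_{n-1} ∘ l_n = 0 for all n ≥ 1. -/

import Mathlib

/-!
The maps `λ_{n,i}` satisfy the presimplicial identities `λ_i ∘ λ_{j+1} = λ_j ∘ λ_i` for `i ≤ j`;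
on generators these are the self-distributivity of `X` and its hierarchical analogue on `Y`.
For any presimplicial family the alternating sum squares to zero: the terms of the double sum
cancel in pairs `(i, j + 1) ↔ (j, i)` with opposite signs.
-/

namespace Stmt5

variable {X Y : Type*} (K : Type*) [CommRing K]

/-- The free `K`-module `V_n` on tuples in `Y^n × X^n`. -/
abbrev V (K : Type*) [CommRing K] (X Y : Type*) (n : ℕ) : Type _ :=
  ((Fin n → Y) × (Fin n → X)) →₀ K

/-- `λ_{n,i}` on generators: act on the entries before `i` by the `i`-th entry
and delete the `i`-th entry. -/
def lamTup (qop : X → X → X) (hop : X → X → Y → Y → Y) {n : ℕ} (i : Fin (n + 1))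
    (t : (Fin (n + 1) → Y) × (Fin (n + 1) → X)) : (Fin n → Y) × (Fin n → X) :=
  (fun j => if (j : ℕ) < (i : ℕ)
      then hop (t.2 j.castSucc) (t.2 i) (t.1 j.castSucc) (t.1 i)
      else t.1 j.succ,
   fun j => if (j : ℕ) < (i : ℕ) then qop (t.2 j.castSucc) (t.2 i) else t.2 j.succ)

/-- The linear map `λ_{n,i} : V_{n+1} → V_n`. -/
noncomputable def lamMap (qop : X → X → X) (hop : X → X → Y → Y → Y) (n : ℕ)
    (i : Fin (n + 1)) : V K X Y (n + 1) →ₗ[K] V K X Y n :=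
  Finsupp.lmapDomain K K (lamTup qop hop i)

/-- `l_n = Σ_i (-1)^{i+1} λ_{n,i}` (written with `0`-based indices). -/
noncomputable def lMap (qop : X → X → X) (hop : X → X → Y → Y → Y) (n : ℕ) :
    V K X Y (n + 1) →ₗ[K] V K X Y n :=
  ∑ i : Fin (n + 1), ((-1 : K) ^ (i : ℕ)) • lamMap K qop hop n i

theorem sum_sum_neg_one_pow_smul_eq_zero {R A : Type*} [Ring R] [AddCommGroup A] [Module R A]
    {n : ℕ} (c : Fin (n + 1) → Fin (n + 2) → A)
    (hc : ∀ i j : Fin (n + 1), i ≤ j → c i j.succ = c j i.castSucc) :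
    ∑ j : Fin (n + 2), ∑ i : Fin (n + 1), (-1 : R) ^ ((j : ℕ) + i) • c i j = 0 := by
  rw [Fin.sum_sum_eq_sum_triangle_add]
  refine Finset.sum_eq_zero fun i _ => Finset.sum_eq_zero fun j hij => ?_
  rw [hc i j (Finset.mem_Ici.mp hij), ← add_smul]
  convert zero_smul R (c j i.castSucc)
  rw [Fin.val_succ, Fin.val_castSucc, show (j : ℕ) + 1 + i = i + j + 1 by omega, pow_succ,
    mul_neg_one, add_neg_cancel]

theorem alternating_sum_comp_alternating_sum_eq_zero {R M₀ M₁ M₂ : Type*} [CommRing R]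
    [AddCommGroup M₀] [AddCommGroup M₁] [AddCommGroup M₂]
    [Module R M₀] [Module R M₁] [Module R M₂] {n : ℕ}
    (f : Fin (n + 1) → M₁ →ₗ[R] M₀) (g : Fin (n + 2) → M₂ →ₗ[R] M₁)
    (hfg : ∀ i j : Fin (n + 1), i ≤ j → (f i).comp (g j.succ) = (f j).comp (g i.castSucc)) :
    (∑ i : Fin (n + 1), (-1 : R) ^ (i : ℕ) • f i).comp
      (∑ j : Fin (n + 2), (-1 : R) ^ (j : ℕ) • g j) = 0 := by
  ext x
  simp only [LinearMap.comp_apply, LinearMap.sum_apply, LinearMap.smul_apply,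
    map_sum, map_smul, Finset.smul_sum, smul_smul, ← pow_add, LinearMap.zero_apply]
  exact sum_sum_neg_one_pow_smul_eq_zero (R := R) (fun i j => f i (g j x))
    fun i j hij => LinearMap.congr_fun (hfg i j hij) x

theorem lamTup_comp_lamTup_succ (qop : X → X → X) (hop : X → X → Y → Y → Y)
    (qdistrib : ∀ x1 x2 x3, qop (qop x1 x2) x3 = qop (qop x1 x3) (qop x2 x3))
    (hdistrib : ∀ x1 x2 x3 (y1 y2 y3 : Y),
      hop (qop x1 x2) x3 (hop x1 x2 y1 y2) y3 =
        hop (qop x1 x3) (qop x2 x3) (hop x1 x3 y1 y3) (hop x2 x3 y2 y3))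
    {n : ℕ} {i j : Fin (n + 1)} (hij : i ≤ j) :
    lamTup qop hop i ∘ lamTup qop hop j.succ =
      lamTup qop hop j ∘ lamTup qop hop i.castSucc := by
  funext t
  -- An entry before `i` is acted on by the `i`-th and the `(j+1)`-st entries in either order,
  -- and the two results agree by self-distributivity; all other entries are only shifted.
  refine Prod.ext (funext fun m => ?_) (funext fun m => ?_) <;>
  · simp only [lamTup, Function.comp_apply, Fin.val_castSucc, Fin.val_succ]
    split_ifs <;>
      first
        | omega
        | rfl
        | (exact (hdistrib _ _ _ _ _ _).symm)
        | (exact (qdistrib _ _ _).symm)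

theorem lamMap_comp_lamMap_succ (qop : X → X → X) (hop : X → X → Y → Y → Y)
    (qdistrib : ∀ x1 x2 x3, qop (qop x1 x2) x3 = qop (qop x1 x3) (qop x2 x3))
    (hdistrib : ∀ x1 x2 x3 (y1 y2 y3 : Y),
      hop (qop x1 x2) x3 (hop x1 x2 y1 y2) y3 =
        hop (qop x1 x3) (qop x2 x3) (hop x1 x3 y1 y3) (hop x2 x3 y2 y3))
    {n : ℕ} {i j : Fin (n + 1)} (hij : i ≤ j) :
    (lamMap K qop hop n i).comp (lamMap K qop hop (n + 1) j.succ) =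
      (lamMap K qop hop n j).comp (lamMap K qop hop (n + 1) i.castSucc) := by
  simp only [lamMap, ← Finsupp.lmapDomain_comp,
    lamTup_comp_lamTup_succ qop hop qdistrib hdistrib hij]

theorem l_comp_l (qop : X → X → X) (hop : X → X → Y → Y → Y)
    (qdistrib : ∀ x1 x2 x3, qop (qop x1 x2) x3 = qop (qop x1 x3) (qop x2 x3))
    (hdistrib : ∀ x1 x2 x3 (y1 y2 y3 : Y),
      hop (qop x1 x2) x3 (hop x1 x2 y1 y2) y3 =
        hop (qop x1 x3) (qop x2 x3) (hop x1 x3 y1 y3) (hop x2 x3 y2 y3))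
    (n : ℕ) :
    (lMap K qop hop n).comp (lMap K qop hop (n + 1)) = 0 :=
  alternating_sum_comp_alternating_sum_eq_zero _ _ fun _ _ hij =>
    lamMap_comp_lamMap_succ K qop hop qdistrib hdistrib hij

end Stmt5
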